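/- For every N ∈ ℕ and every fixed x ∈ ℝ^N_<, the non-colliding probability tends to one in the short-time limit: lim_{t → 0+} 𝒩_N(t; x) = 1. -/

import Mathlib

/-!
Expanding the determinant, `𝒩_N(t; x) = ∑_σ sgn σ · P_t^{x ∘ σ}(ℝ^N_<)`, where `P_t^c` is the
law at time `t` of independent Brownian motions started at `c`, whose density is
`∏ i, p_t(c_i, ·)`. By Chebyshev, under `P_t^c` the coordinate `y_k` is `δ`-far from `c_k`
with probability at most `t / δ²`; hence if `c_j < c_i`, the event `y_i ≤ y_j` has probability
tending to `0`. For `σ ≠ 1` there is an inversion `i < j`, `x_{σ j} < x_{σ i}`, while `y_i < y_j`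
on the chamber, so the `σ`-term vanishes in the limit. For `σ = 1` the complement of the chamber
is covered by the events `y_j ≤ y_i`, `i < j`, so `P_t^x(ℝ^N_<) → 1`.
-/

open MeasureTheory

/-- The heat kernel `p_t(x,y) = (2πt)^{-1/2} exp(-(x-y)²/(2t))`. -/
noncomputable def heatKernel (t x y : ℝ) : ℝ :=
  (1 / Real.sqrt (2 * Real.pi * t)) * Real.exp (-(x - y)^2 / (2 * t))

/-- The Weyl chamber `ℝ^N_< = {x : x_1 < x_2 < ⋯ < x_N}`. -/
def weylChamber (N : ℕ) : Set (Fin N → ℝ) := {x | StrictMono x}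

/-- The Karlin–McGregor determinant `f_N(t; x, y) = det[p_t(x_i, y_j)]`. -/
noncomputable def fKM (N : ℕ) (t : ℝ) (x y : Fin N → ℝ) : ℝ :=
  Matrix.det (Matrix.of fun i j => heatKernel t (x i) (y j))

/-- The non-colliding probability `𝒩_N(t; x) = ∫_{ℝ^N_<} f_N(t; x, y) dy`. -/
noncomputable def NKM (N : ℕ) (t : ℝ) (x : Fin N → ℝ) : ℝ :=
  ∫ y in weylChamber N, fKM N t x y

open Filter Topology ProbabilityTheory
open scoped NNReal ENNReal

lemma heatKernel_eq_gaussianPDFReal {t : ℝ} (ht : 0 ≤ t) (x y : ℝ) :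
    heatKernel t x y = gaussianPDFReal x t.toNNReal y := by
  rw [heatKernel, gaussianPDFReal, Real.coe_toNNReal t ht, one_div, sub_sq_comm]

lemma gaussianReal_abs_sub_ge_le (c : ℝ) (v : ℝ≥0) {δ : ℝ} (hδ : 0 < δ) :
    gaussianReal c v {u | δ ≤ |u - c|} ≤ ENNReal.ofReal (v / δ ^ 2) := by
  have h := meas_ge_le_variance_div_sq (memLp_id_gaussianReal (μ := c) (v := v) 2) hδ
  simpa only [id, integral_id_gaussianReal, variance_id_gaussianReal] using h

lemma Equiv.Perm.exists_inversion_of_ne_one {α : Type*} [LinearOrder α] [Finite α]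
    {σ : Equiv.Perm α} (hσ : σ ≠ 1) : ∃ i j, i < j ∧ σ j < σ i := by
  by_contra! h
  exact hσ <| Equiv.ext fun i => StrictMono.apply_eq fun a b hab =>
    (h a b hab).lt_of_ne (σ.injective.ne hab.ne)

section heatMeasure

variable {ι : Type*} [Fintype ι]

noncomputable def heatMeasure (c : ι → ℝ) (v : ℝ≥0) : Measure (ι → ℝ) :=
  Measure.pi fun i => gaussianReal (c i) v

instance (c : ι → ℝ) (v : ℝ≥0) : IsProbabilityMeasure (heatMeasure c v) := by
  unfold heatMeasure; infer_instance

lemma heatMeasure_eq_withDensity (c : ι → ℝ) {v : ℝ≥0} (hv : v ≠ 0) :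
    heatMeasure c v = volume.withDensity fun y => ∏ i, gaussianPDF (c i) v (y i) := by
  refine Measure.pi_eq fun s hs => ?_
  simp_rw [withDensity_apply _ (MeasurableSet.univ_pi hs), volume_pi, Measure.restrict_pi_pi,
    gaussianPDF, ← ENNReal.ofReal_prod_of_nonneg fun i _ => gaussianPDFReal_nonneg _ _ _]
  rw [← ofReal_integral_eq_lintegral_ofReal, integral_fintype_prod_eq_prod,
    ENNReal.ofReal_prod_of_nonneg fun i _ =>
      setIntegral_nonneg (hs i) fun _ _ => gaussianPDFReal_nonneg _ _ _]
  · simp_rw [gaussianReal_apply_eq_integral _ hv]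
  · exact Integrable.fintype_prod fun i => (integrable_gaussianPDFReal _ _).restrict
  · exact ae_of_all _ fun y => Finset.prod_nonneg fun i _ => gaussianPDFReal_nonneg _ _ _

lemma setIntegral_prod_gaussianPDFReal (c : ι → ℝ) {v : ℝ≥0} (hv : v ≠ 0) {S : Set (ι → ℝ)}
    (hS : MeasurableSet S) :
    ∫ y in S, ∏ i, gaussianPDFReal (c i) v (y i) = (heatMeasure c v).real S := by
  rw [heatMeasure_eq_withDensity c hv, measureReal_def, withDensity_apply _ hS,
    integral_eq_lintegral_of_nonneg_ae
      (ae_of_all _ fun y => Finset.prod_nonneg fun i _ => gaussianPDFReal_nonneg _ _ _)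
      (Finset.measurable_prod _ fun i _ =>
        (measurable_gaussianPDFReal _ _).comp (measurable_pi_apply i)).aestronglyMeasurable]
  simp_rw [gaussianPDF, ENNReal.ofReal_prod_of_nonneg fun i _ => gaussianPDFReal_nonneg _ _ _]

lemma heatMeasure_abs_sub_ge_le (c : ι → ℝ) (v : ℝ≥0) (k : ι) {δ : ℝ} (hδ : 0 < δ) :
    heatMeasure c v {y | δ ≤ |y k - c k|} ≤ ENNReal.ofReal (v / δ ^ 2) := by
  have hA : MeasurableSet {u : ℝ | δ ≤ |u - c k|} :=
    measurableSet_le measurable_const (by fun_prop)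
  calc heatMeasure c v {y | δ ≤ |y k - c k|}
      = gaussianReal (c k) v {u | δ ≤ |u - c k|} :=
        (measurePreserving_eval (fun i => gaussianReal (c i) v) k).measure_preimage
          hA.nullMeasurableSet
    _ ≤ _ := gaussianReal_abs_sub_ge_le (c k) v hδ

lemma tendsto_heatMeasure_le_of_lt {c : ι → ℝ} {i j : ι} (hc : c j < c i) :
    Tendsto (fun v => heatMeasure c v {y | y i ≤ y j}) (𝓝 0) (𝓝 0) := by
  set δ := (c i - c j) / 2 with hδ_def
  have hδ : 0 < δ := by linarith
  have hcover : {y : ι → ℝ | y i ≤ y j} ⊆ {y | δ ≤ |y i - c i|} ∪ {y | δ ≤ |y j - c j|} := by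
    intro y (hy : y i ≤ y j)
    by_contra! h
    simp only [Set.mem_union, Set.mem_ofPred_eq, not_or, not_le, abs_lt] at h
    linarith [h.1.1, h.2.2]
  have hbound (v : ℝ≥0) : heatMeasure c v {y | y i ≤ y j} ≤ 2 * ENNReal.ofReal (v / δ ^ 2) :=
    calc heatMeasure c v {y | y i ≤ y j}
        ≤ heatMeasure c v {y | δ ≤ |y i - c i|} + heatMeasure c v {y | δ ≤ |y j - c j|} :=
          (measure_mono hcover).trans (measure_union_le _ _)
      _ ≤ 2 * ENNReal.ofReal (v / δ ^ 2) := by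
          rw [two_mul]
          exact add_le_add (heatMeasure_abs_sub_ge_le c v i hδ)
            (heatMeasure_abs_sub_ge_le c v j hδ)
  have hlim : Tendsto (fun v : ℝ≥0 => ENNReal.ofReal (v / δ ^ 2)) (𝓝 0) (𝓝 0) := by
    simpa [Function.comp_def] using (ENNReal.continuous_ofReal.comp
      (by fun_prop : Continuous fun v : ℝ≥0 => (v : ℝ) / δ ^ 2)).tendsto 0
  exact tendsto_nhds_bot_mono'
    (by simpa using ENNReal.Tendsto.const_mul hlim (Or.inr ENNReal.ofNat_ne_top)) hbound

end heatMeasure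

lemma measurableSet_weylChamber (N : ℕ) : MeasurableSet (weylChamber N) := by
  have : weylChamber N = ⋂ (i) (j) (_ : i < j), {y : Fin N → ℝ | y i < y j} := by
    ext y; simp [weylChamber, StrictMono]
  rw [this]
  exact .iInter fun i => .iInter fun j => .iInter fun _ =>
    measurableSet_lt (measurable_pi_apply i) (measurable_pi_apply j)

section weylChamber

variable {N : ℕ} {x : Fin N → ℝ}

lemma tendsto_heatMeasure_compl_weylChamber (hx : x ∈ weylChamber N) :
    Tendsto (fun v => heatMeasure x v (weylChamber N)ᶜ) (𝓝 0) (𝓝 0) := by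
  set P := (Finset.univ : Finset (Fin N × Fin N)).filter fun p => p.1 < p.2
  have hcover : (weylChamber N)ᶜ ⊆ ⋃ p ∈ P, {y | y p.2 ≤ y p.1} := by
    intro y (hy : ¬ StrictMono y)
    simp only [StrictMono, not_forall, not_lt] at hy
    obtain ⟨i, j, hij, hji⟩ := hy
    exact Set.mem_biUnion (x := (i, j)) (by simp [P, hij]) hji
  have hlim : Tendsto (fun v => ∑ p ∈ P, heatMeasure x v {y | y p.2 ≤ y p.1}) (𝓝 0) (𝓝 0) := by
    simpa using tendsto_finsetSum P fun p hp =>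
      tendsto_heatMeasure_le_of_lt (hx (Finset.mem_filter.1 hp).2)
  exact tendsto_nhds_bot_mono' hlim
    fun v => (measure_mono hcover).trans (measure_biUnion_finset_le P _)

lemma tendsto_heatMeasure_weylChamber (hx : x ∈ weylChamber N) :
    Tendsto (fun v => (heatMeasure x v).real (weylChamber N)) (𝓝 0) (𝓝 1) := by
  have hcompl : Tendsto (fun v => (heatMeasure x v).real (weylChamber N)ᶜ) (𝓝 0) (𝓝 0) :=
    (ENNReal.tendsto_toReal ENNReal.zero_ne_top).comp (tendsto_heatMeasure_compl_weylChamber hx)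
  have h (v : ℝ≥0) : (heatMeasure x v).real (weylChamber N) =
      1 - (heatMeasure x v).real (weylChamber N)ᶜ := by
    rw [probReal_compl_eq_one_sub (measurableSet_weylChamber N), sub_sub_cancel]
  simp_rw [h]
  simpa using tendsto_const_nhds.sub hcompl

lemma tendsto_heatMeasure_weylChamber_of_ne_one (hx : x ∈ weylChamber N)
    {σ : Equiv.Perm (Fin N)} (hσ : σ ≠ 1) :
    Tendsto (fun v => heatMeasure (x ∘ σ) v (weylChamber N)) (𝓝 0) (𝓝 0) := by
  obtain ⟨i, j, hij, hσij⟩ := Equiv.Perm.exists_inversion_of_ne_one hσ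
  exact tendsto_nhds_bot_mono' (tendsto_heatMeasure_le_of_lt (c := x ∘ σ) (hx hσij))
    fun v => measure_mono fun y (hy : StrictMono y) => (hy hij).le

lemma tendsto_heatMeasure_perm_weylChamber (hx : x ∈ weylChamber N) (σ : Equiv.Perm (Fin N)) :
    Tendsto (fun v => (heatMeasure (x ∘ σ) v).real (weylChamber N)) (𝓝 0)
      (𝓝 (if σ = 1 then 1 else 0)) := by
  split_ifs with hσ
  · subst hσ
    exact tendsto_heatMeasure_weylChamber hx
  · exact (ENNReal.tendsto_toReal ENNReal.zero_ne_top).comp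
      (tendsto_heatMeasure_weylChamber_of_ne_one hx hσ)

lemma NKM_eq_sum_perm {t : ℝ} (ht : 0 < t) (x : Fin N → ℝ) :
    NKM N t x = ∑ σ : Equiv.Perm (Fin N),
      ((Equiv.Perm.sign σ : ℤ) : ℝ) * (heatMeasure (x ∘ σ) t.toNNReal).real (weylChamber N) := by
  have hdet (y : Fin N → ℝ) : fKM N t x y = ∑ σ : Equiv.Perm (Fin N),
      ((Equiv.Perm.sign σ : ℤ) : ℝ) * ∏ i, gaussianPDFReal (x (σ i)) t.toNNReal (y i) := by
    simp_rw [fKM, Matrix.det_apply, Units.smul_def, zsmul_eq_mul, Matrix.of_apply,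
      heatKernel_eq_gaussianPDFReal ht.le]
  have hv : t.toNNReal ≠ 0 := by simpa using ht
  simp_rw [NKM, hdet]
  rw [integral_finsetSum]
  · refine Finset.sum_congr rfl fun σ _ => ?_
    rw [integral_const_mul,
      ← setIntegral_prod_gaussianPDFReal (x ∘ σ) hv (measurableSet_weylChamber N)]
    rfl
  · exact fun σ _ => ((Integrable.fintype_prod (μ := fun _ => volume) fun i =>
      integrable_gaussianPDFReal _ _).const_mul _).integrableOn

end weylChamber

/-- Short-time limit: for fixed `x` in the Weyl chamber, `𝒩_N(t; x) → 1` as `t → 0+`. -/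
theorem nonColliding_tendsto_one (N : ℕ) (x : Fin N → ℝ) (hx : x ∈ weylChamber N) :
    Filter.Tendsto (fun t => NKM N t x) (nhdsWithin 0 (Set.Ioi 0)) (nhds 1) := by
  have htime : Tendsto Real.toNNReal (𝓝[>] 0) (𝓝 0) := by
    simpa using (continuous_real_toNNReal.tendsto 0).mono_left nhdsWithin_le_nhds
  have hsum := tendsto_finsetSum Finset.univ fun σ (_ : σ ∈ Finset.univ) =>
    (tendsto_heatMeasure_perm_weylChamber hx σ).const_mul ((Equiv.Perm.sign σ : ℤ) : ℝ)
  simp only [mul_ite, mul_one, mul_zero, Finset.sum_ite_eq', Finset.mem_univ, if_true,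
    Equiv.Perm.sign_one, Units.val_one, Int.cast_one] at hsum
  refine (hsum.comp htime).congr' ?_
  filter_upwards [self_mem_nhdsWithin] with t ht using (NKM_eq_sum_perm ht x).symm
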